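/- arXiv:1207.6680 — 3 statements merged into one kernel-verified Lean document; each statement's English description precedes it below -/
import Mathlib

section
/- Let 0 < r < 1 and let r_1,...,r_N ∈ (0,1) with each r_j = r^{k_j} for positive integers k_j. Then there is a unique real number D such that ∑_{j=1}^N r_j^D = 1; moreover D = -log_r φ where φ is the unique positive real root of x^k = a_1 x^{k-1} + ... + a_k, with k = max_j k_j and a_q = #{j : k_j = q}. -/
/-!
`D ↦ ∑ j, r_j ^ D` is continuous and strictly decreasing, is `N ≥ 1` at `D = 0` and tends to `0`,
so it takes the value `1` exactly once. Grouping the indices `j` by `k_j`, the characteristic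
equation divided by `φ ^ k` reads `∑ j, (φ⁻¹) ^ k_j = 1`, and `r ^ (-log_r φ) = φ⁻¹`.
-/

open Finset Filter Topology

theorem exists_unique_sum_rpow_eq_one {ι : Type*} [Fintype ι] [Nonempty ι] (c : ι → ℝ)
    (hc0 : ∀ i, 0 < c i) (hc1 : ∀ i, c i < 1) : ∃! D : ℝ, ∑ i, c i ^ D = 1 := by
  set f : ℝ → ℝ := fun D => ∑ i, c i ^ D
  have hanti : StrictAnti f := fun x y hxy =>
    sum_lt_sum_of_nonempty univ_nonempty fun i _ =>
      Real.rpow_lt_rpow_of_exponent_gt (hc0 i) (hc1 i) hxy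
  have hcont : Continuous f :=
    continuous_finsetSum _ fun i _ => Real.continuous_const_rpow (hc0 i).ne'
  have htend : Tendsto f atTop (𝓝 0) := by
    simpa using tendsto_finsetSum univ fun i _ =>
      tendsto_rpow_atTop_of_base_lt_one _ (by linarith [hc0 i]) (hc1 i)
  have hf0 : 1 ≤ f 0 := by simp [f, Nat.one_le_iff_ne_zero]
  obtain ⟨M, hM1, hM0⟩ :=
    ((htend.eventually_lt_const one_pos).and (eventually_ge_atTop 0)).exists
  obtain ⟨D, -, hD⟩ := intermediate_value_Icc' hM0 hcont.continuousOn ⟨hM1.le, hf0⟩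
  exact ⟨D, hD, fun y hy => hanti.injective (hy.trans hD.symm)⟩

theorem sum_range_card_filter_mul_eq_sum {ι R : Type*} [Fintype ι] [Semiring R]
    (k : ι → ℕ) (K : ℕ) (hk : ∀ j, k j ∈ Icc 1 K) (g : ℕ → R) :
    ∑ q ∈ range K, (#{j | k j = q + 1} : R) * g (q + 1) = ∑ j, g (k j) := by
  rw [← sum_fiberwise_of_maps_to (g := fun j => k j - 1) (t := range K)
    fun j _ => mem_range.2 (by have := mem_Icc.1 (hk j); omega)]
  refine sum_congr rfl fun q _ => ?_
  have hfiber : univ.filter (fun j => k j - 1 = q) = univ.filter (fun j => k j = q + 1) :=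
    filter_congr fun j _ => by have := mem_Icc.1 (hk j); omega
  rw [hfiber, sum_congr rfl fun j hj => by rw [(mem_filter.1 hj).2], sum_const, nsmul_eq_mul]

theorem sum_inv_pow_eq_one_of_pow_eq_sum {ι : Type*} [Fintype ι] (k : ι → ℕ) (K : ℕ)
    (hk : ∀ j, k j ∈ Icc 1 K) {φ : ℝ} (hφ : φ ≠ 0)
    (hchar : φ ^ K = ∑ q ∈ range K, (#{j | k j = q + 1} : ℝ) * φ ^ (K - (q + 1))) :
    ∑ j, φ⁻¹ ^ k j = 1 := by
  have hK : φ ^ K ≠ 0 := pow_ne_zero K hφ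
  rw [sum_range_card_filter_mul_eq_sum k K hk fun n => φ ^ (K - n)] at hchar
  simp_rw [pow_sub₀ φ hφ (mem_Icc.1 (hk _)).2, ← mul_sum, ← inv_pow] at hchar
  exact (mul_eq_left₀ hK).1 hchar.symm

theorem pow_rpow_neg_logb {r φ : ℝ} (hr0 : 0 < r) (hr1 : r ≠ 1) (hφ : 0 < φ) (n : ℕ) :
    (r ^ n) ^ (-Real.logb r φ) = φ⁻¹ ^ n := by
  rw [← Real.rpow_pow_comm hr0.le, Real.rpow_neg hr0.le, Real.rpow_logb hr0 hr1 hφ]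

theorem stmt_3 (N : ℕ) (hN : 2 ≤ N) (r : ℝ) (hr0 : 0 < r) (hr1 : r < 1)
    (k : Fin N → ℕ) (hk : ∀ j, 0 < k j) :
    (∃! D : ℝ, ∑ j : Fin N, ((r ^ k j : ℝ)) ^ D = 1) ∧
    ∀ φ : ℝ, 0 < φ →
      φ ^ (Finset.univ.sup k) =
        ∑ q ∈ Finset.range (Finset.univ.sup k),
          (((Finset.univ.filter fun j : Fin N => k j = q + 1).card : ℝ)) *
            φ ^ (Finset.univ.sup k - (q + 1)) →
      ∑ j : Fin N, ((r ^ k j : ℝ)) ^ (-(Real.logb r φ)) = 1 := by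
  have : Nonempty (Fin N) := ⟨⟨0, by omega⟩⟩
  refine ⟨exists_unique_sum_rpow_eq_one _ (fun j => pow_pos hr0 _)
    fun j => pow_lt_one₀ hr0.le hr1 (hk j).ne', fun φ hφ hchar => ?_⟩
  simp_rw [pow_rpow_neg_logb hr0 hr1.ne hφ]
  exact sum_inv_pow_eq_one_of_pow_eq_sum k _ (fun j => mem_Icc.2 ⟨hk j, le_sup (mem_univ j)⟩)
    hφ.ne' hchar
end

section
/- A complex number s satisfies 2^{-s} + 4^{-s} = 1 if and only if s = log_2 φ + i·(2π/log 2)·z for some integer z, or s = -log_2 φ + i·(2π/log 2)·(z + 1/2) for some integer z, where φ = (1+√5)/2. -/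
/-!
Put `w = 2^{-s}`, so that `4^{-s} = w²` and the equation reads `w² + w - 1 = 0`, i.e.
`w = φ⁻¹ = e^{-log φ}` or `w = -φ = e^{log φ - πi}`. As `2^{-s} = e^{-s log 2}`, each of the two
values determines `s` up to the period `2πi / log 2`.
-/

open Complex
open scoped Real goldenRatio

theorem add_sq_eq_one_iff_goldenRatio {z : ℂ} : z + z ^ 2 = 1 ↔ z = (φ : ℂ)⁻¹ ∨ z = -φ := by
  have hinv : (φ : ℂ)⁻¹ = φ - 1 := by
    rw [← ofReal_inv, Real.inv_goldenRatio, ← Real.one_sub_goldenConj]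
    push_cast
    ring
  have hsq : (φ : ℂ) ^ 2 = φ + 1 := by exact_mod_cast Real.goldenRatio_sq
  have hfactor : z + z ^ 2 - 1 = (z - (φ : ℂ)⁻¹) * (z + φ) := by
    rw [hinv]
    linear_combination hsq
  rw [← sub_eq_zero, hfactor, mul_eq_zero, sub_eq_zero, add_eq_zero_iff_eq_neg]

theorem cpow_neg_eq_exp_iff {b : ℂ} (hb : b ≠ 0) (hb1 : b ≠ 1) {s u : ℂ} :
    b ^ (-s) = exp u ↔ ∃ n : ℤ, s = -u / log b + I * (2 * π / log b) * n := by
  have hlog : log b ≠ 0 := fun h ↦ hb1 (by rw [← exp_log hb, h, exp_zero])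
  rw [cpow_def_of_ne_zero hb, exp_eq_exp_iff_exists_int]
  refine (Equiv.neg ℤ).exists_congr fun n ↦ ?_
  push_cast [Equiv.neg_apply]
  constructor <;> intro h
  · field_simp
    linear_combination -h
  · rw [h]
    field_simp
    ring

theorem four_cpow_eq_two_cpow_sq (s : ℂ) : (4 : ℂ) ^ s = ((2 : ℂ) ^ s) ^ 2 := by
  rw [← cpow_nat_mul, show (4 : ℂ) = (2 : ℕ) ^ 2 by norm_num, ← natCast_cpow_natCast_mul]
  norm_num

theorem two_cpow_neg_add_four_cpow_neg_eq_one_iff (s : ℂ) :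
    (2 : ℂ) ^ (-s) + 4 ^ (-s) = 1 ↔
      (2 : ℂ) ^ (-s) = exp (-Real.log φ) ∨ (2 : ℂ) ^ (-s) = exp (Real.log φ - π * I) := by
  have hexp : exp (Real.log φ) = φ := by rw [← ofReal_exp, Real.exp_log Real.goldenRatio_pos]
  rw [four_cpow_eq_two_cpow_sq, add_sq_eq_one_iff_goldenRatio, exp_neg, exp_sub, hexp,
    exp_pi_mul_I, div_neg, div_one]

theorem stmt_9 :
    ∀ s : ℂ, ((2 : ℂ) ^ (-s) + (4 : ℂ) ^ (-s) = 1 ↔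
      ((∃ z : ℤ, s = (Real.logb 2 ((1 + Real.sqrt 5) / 2) : ℂ) +
          Complex.I * ((2 * Real.pi / Real.log 2 : ℝ) : ℂ) * (z : ℂ)) ∨
       (∃ z : ℤ, s = -(Real.logb 2 ((1 + Real.sqrt 5) / 2) : ℂ) +
          Complex.I * ((2 * Real.pi / Real.log 2 : ℝ) : ℂ) * ((z : ℂ) + 1 / 2)))) := by
  intro s
  have hlog : (Real.log 2 : ℂ) = log 2 := by norm_cast
  rw [two_cpow_neg_add_four_cpow_neg_eq_one_iff, cpow_neg_eq_exp_iff two_ne_zero (by norm_num),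
    cpow_neg_eq_exp_iff two_ne_zero (by norm_num)]
  refine or_congr (exists_congr fun n ↦ Eq.congr_right ?_)
    (exists_congr fun n ↦ Eq.congr_right ?_) <;>
  · rw [Real.logb]
    push_cast
    rw [hlog]
    ring
end

section
/- Let N ≥ 2, k = (k_1,...,k_N) a vector of nonnegative integers, not all zero, K = ∑ k_j, and r_1,...,r_N ∈ (0,1). For real s, the series ∑_{n=1}^∞ C(nK; nk_1,...,nk_N) · (r_1^{k_1}···r_N^{k_N})^{ns} (multinomial coefficients) converges if s > ρ and diverges if s < ρ, where ρ = log( k_1^{k_1}···k_N^{k_N} / K^K ) / log( r_1^{k_1}···r_N^{k_N} ) (with the convention 0^0 = 1). -/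
open Real Finset Filter Nat Topology

/-!
Stirling-type bounds `(m/e)^m ≤ m! ≤ e √m (m/e)^m` show that the multinomial coefficient of
`m • k` is `(K^K / ∏ kⱼ^kⱼ)^m` up to a factor polynomial in `m`. With `R = ∏ rⱼ^kⱼ ∈ (0,1)`
we have `R^ρ = ∏ kⱼ^kⱼ / K^K`, so the `m`-th term of the series is a geometric term of ratio
`R^(s-ρ)` distorted by a polynomial factor, and `R^(s-ρ) < 1` exactly when `ρ < s`.
-/

theorem pow_self_le_exp_one_pow_mul_factorial (m : ℕ) : (m : ℝ) ^ m ≤ exp 1 ^ m * m ! := by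
  have h := pow_div_factorial_le_exp (x := (m : ℝ)) m.cast_nonneg m
  rwa [div_le_iff₀ (by positivity), ← exp_one_pow] at h

theorem exp_one_pow_mul_factorial_le {m : ℕ} (hm : m ≠ 0) :
    exp 1 ^ m * m ! ≤ exp 1 * √m * (m : ℝ) ^ m := by
  obtain ⟨n, rfl⟩ : ∃ n, m = n + 1 := ⟨m - 1, by omega⟩
  have h : Stirling.stirlingSeq (n + 1) ≤ exp 1 / √2 :=
    Stirling.stirlingSeq_one ▸ Stirling.stirlingSeq'_antitone (Nat.zero_le n)
  rw [Stirling.stirlingSeq, div_le_div_iff₀ (by positivity) (by positivity),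
    Real.sqrt_mul zero_le_two, div_pow] at h
  field_simp at h
  linarith

theorem exp_one_pow_mul_factorial_le_of_le {m n : ℕ} (hn : n ≠ 0) (hmn : m ≤ n) :
    exp 1 ^ m * m ! ≤ exp 1 * n * (m : ℝ) ^ m := by
  rcases Nat.eq_zero_or_pos m with rfl | hm
  · have : (1 : ℝ) ≤ n := by exact_mod_cast Nat.one_le_iff_ne_zero.2 hn
    simpa using one_le_mul_of_one_le_of_one_le (one_le_exp zero_le_one) this
  · refine (exp_one_pow_mul_factorial_le hm.ne').trans ?_
    have hsqrt : √(m : ℝ) ≤ n :=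
      (sqrt_le_left n.cast_nonneg).2 (by exact_mod_cast hmn.trans (Nat.le_self_pow two_ne_zero n))
    gcongr

theorem cast_pow_mul_self_mul (m K : ℕ) :
    ((m * K : ℕ) : ℝ) ^ (m * K) = (m : ℝ) ^ (m * K) * ((K : ℝ) ^ K) ^ m := by
  push_cast
  ring

section Multinomial

variable {ι : Type*} {s : Finset ι}

theorem multinomial_mul_prod_pow_self_le {f : ι → ℕ} (hf : ∑ i ∈ s, f i ≠ 0) :
    (multinomial s f : ℝ) * ∏ i ∈ s, (f i : ℝ) ^ f i ≤
      exp 1 * (∑ i ∈ s, f i : ℕ) * ((∑ i ∈ s, f i : ℕ) : ℝ) ^ (∑ i ∈ s, f i) := by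
  have hspec : (∏ i ∈ s, ((f i)! : ℝ)) * multinomial s f = (∑ i ∈ s, f i)! := by
    exact_mod_cast multinomial_spec s f
  calc (multinomial s f : ℝ) * ∏ i ∈ s, (f i : ℝ) ^ f i
      ≤ multinomial s f * ∏ i ∈ s, (exp 1 ^ f i * (f i)!) := by
        gcongr with i
        exact pow_self_le_exp_one_pow_mul_factorial _
    _ = exp 1 ^ (∑ i ∈ s, f i) * (∑ i ∈ s, f i)! := by
        rw [prod_mul_distrib, prod_pow_eq_pow_sum, ← hspec]; ring
    _ ≤ _ := exp_one_pow_mul_factorial_le_of_le hf le_rfl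

theorem pow_self_le_multinomial_mul_prod_pow_self {f : ι → ℕ} (hf : ∑ i ∈ s, f i ≠ 0) :
    ((∑ i ∈ s, f i : ℕ) : ℝ) ^ (∑ i ∈ s, f i) ≤
      (exp 1 * (∑ i ∈ s, f i : ℕ)) ^ s.card * (multinomial s f * ∏ i ∈ s, (f i : ℝ) ^ f i) := by
  have hspec : (∏ i ∈ s, ((f i)! : ℝ)) * multinomial s f = (∑ i ∈ s, f i)! := by
    exact_mod_cast multinomial_spec s f
  calc ((∑ i ∈ s, f i : ℕ) : ℝ) ^ (∑ i ∈ s, f i)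
      ≤ exp 1 ^ (∑ i ∈ s, f i) * (∑ i ∈ s, f i)! := pow_self_le_exp_one_pow_mul_factorial _
    _ = multinomial s f * ∏ i ∈ s, (exp 1 ^ f i * (f i)!) := by
        rw [prod_mul_distrib, prod_pow_eq_pow_sum, ← hspec]; ring
    _ ≤ multinomial s f * ∏ i ∈ s, (exp 1 * (∑ i ∈ s, f i : ℕ) * (f i : ℝ) ^ f i) := by
        gcongr multinomial s f * ?_
        exact prod_le_prod (fun _ _ ↦ by positivity) fun i hi ↦
          exp_one_pow_mul_factorial_le_of_le hf (single_le_sum (fun _ _ ↦ Nat.zero_le _) hi)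
    _ = _ := by rw [prod_mul_distrib, prod_const]; ring

theorem prod_mul_pow_mul (k : ι → ℕ) (m : ℕ) :
    ∏ i ∈ s, ((m * k i : ℕ) : ℝ) ^ (m * k i) =
      (m : ℝ) ^ (m * ∑ i ∈ s, k i) * (∏ i ∈ s, (k i : ℝ) ^ k i) ^ m := by
  rw [mul_sum, ← prod_pow_eq_pow_sum, ← prod_pow, ← prod_mul_distrib]
  refine prod_congr rfl fun i _ ↦ ?_
  push_cast
  rw [mul_pow, pow_mul, pow_mul']

variable {k : ι → ℕ} {K m : ℕ}

theorem multinomial_mul_pow_le (hK : ∑ i ∈ s, k i = K) (hK0 : K ≠ 0) (hm : m ≠ 0) :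
    (multinomial s (fun i ↦ m * k i) : ℝ) * ((∏ i ∈ s, (k i : ℝ) ^ k i) / (K : ℝ) ^ K) ^ m ≤
      exp 1 * K * m := by
  have hsum : ∑ i ∈ s, m * k i = m * K := by rw [← mul_sum, hK]
  have h := multinomial_mul_prod_pow_self_le (f := fun i ↦ m * k i) (hsum ▸ mul_ne_zero hm hK0)
  rw [prod_mul_pow_mul, hsum, hK, cast_pow_mul_self_mul] at h
  refine le_of_mul_le_mul_left ?_ (by positivity : (0 : ℝ) < m ^ (m * K) * ((K : ℝ) ^ K) ^ m)
  calc (m : ℝ) ^ (m * K) * ((K : ℝ) ^ K) ^ m *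
        ((multinomial s (fun i ↦ m * k i) : ℝ) * ((∏ i ∈ s, (k i : ℝ) ^ k i) / (K : ℝ) ^ K) ^ m)
      = multinomial s (fun i ↦ m * k i) *
          ((m : ℝ) ^ (m * K) * (∏ i ∈ s, (k i : ℝ) ^ k i) ^ m) := by
        rw [div_pow]; field_simp
    _ ≤ _ := h
    _ = _ := by push_cast; ring

theorem one_le_multinomial_mul_pow (hK : ∑ i ∈ s, k i = K) (hK0 : K ≠ 0) (hm : m ≠ 0) :
    1 ≤ (exp 1 * K) ^ s.card * (m : ℝ) ^ s.card *
      ((multinomial s (fun i ↦ m * k i) : ℝ) * ((∏ i ∈ s, (k i : ℝ) ^ k i) / (K : ℝ) ^ K) ^ m) := by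
  have hsum : ∑ i ∈ s, m * k i = m * K := by rw [← mul_sum, hK]
  have h := pow_self_le_multinomial_mul_prod_pow_self (s := s) (f := fun i ↦ m * k i)
    (hsum ▸ mul_ne_zero hm hK0)
  rw [prod_mul_pow_mul, hsum, hK, cast_pow_mul_self_mul] at h
  refine le_of_mul_le_mul_left ?_ (by positivity : (0 : ℝ) < m ^ (m * K) * ((K : ℝ) ^ K) ^ m)
  calc (m : ℝ) ^ (m * K) * ((K : ℝ) ^ K) ^ m * 1
      = (m : ℝ) ^ (m * K) * ((K : ℝ) ^ K) ^ m := mul_one _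
    _ ≤ _ := h
    _ = _ := by rw [div_pow]; push_cast; field_simp; ring

end Multinomial

section Series

variable {a : ℕ → ℝ} {C x : ℝ}

theorem summable_of_eventually_le_pow_mul_geometric (d : ℕ) (ha : ∀ n, 0 ≤ a n) (hx0 : 0 ≤ x)
    (hx1 : x < 1) (h : ∀ᶠ n in atTop, a n ≤ C * n ^ d * x ^ n) : Summable a := by
  refine Summable.of_norm_bounded_eventually_nat
    ((summable_pow_mul_geometric_of_norm_lt_one d (by rwa [norm_of_nonneg hx0])).mul_left C) ?_
  filter_upwards [h] with n hn
  rwa [norm_of_nonneg (ha n), ← mul_assoc]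

theorem not_summable_of_eventually_geometric_le_pow_mul (d : ℕ) (hx : 1 < x)
    (h : ∀ᶠ n in atTop, x ^ n ≤ C * n ^ d * a n) : ¬ Summable a := by
  intro ha
  have hlim : Tendsto (fun n : ℕ ↦ C * (n ^ d / x ^ n) * a n) atTop (𝓝 0) := by
    simpa using ((tendsto_pow_const_div_const_pow_of_one_lt d hx).const_mul C).mul
      ha.tendsto_atTop_zero
  obtain ⟨n, hn, hlt⟩ := (h.and (hlim.eventually_lt_const one_pos)).exists
  have hxn : 0 < x ^ n := pow_pos (one_pos.trans hx) n
  have : C * n ^ d * a n = C * (n ^ d / x ^ n) * a n * x ^ n := by field_simp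
  linarith [mul_lt_mul_of_pos_right hlt hxn]

end Series

theorem stmt_15_general (N : ℕ) (k : Fin N → ℕ) (hk : ∃ j, 0 < k j)
    (K : ℕ) (hK : K = ∑ j : Fin N, k j)
    (r : Fin N → ℝ) (hr : ∀ j, 0 < r j ∧ r j < 1)
    (ρ : ℝ)
    (hρ : ρ = Real.log ((∏ j : Fin N, (k j : ℝ) ^ k j) / (K : ℝ) ^ K) /
        Real.log (∏ j : Fin N, r j ^ k j)) :
    ∀ s : ℝ,
      (ρ < s → Summable fun n : ℕ =>
        (Nat.multinomial Finset.univ (fun j : Fin N => (n + 1) * k j) : ℝ) *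
          (∏ j : Fin N, r j ^ k j) ^ (((n : ℝ) + 1) * s)) ∧
      (s < ρ → ¬ Summable fun n : ℕ =>
        (Nat.multinomial Finset.univ (fun j : Fin N => (n + 1) * k j) : ℝ) *
          (∏ j : Fin N, r j ^ k j) ^ (((n : ℝ) + 1) * s)) := by
  obtain ⟨j₀, hj₀⟩ := hk
  have hK0 : K ≠ 0 :=
    (hj₀.trans_le (hK ▸ single_le_sum (fun _ _ ↦ Nat.zero_le _) (mem_univ j₀))).ne'
  have hR0 : 0 < ∏ j, r j ^ k j := prod_pos fun j _ ↦ pow_pos (hr j).1 _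
  have hR1 : ∏ j, r j ^ k j < 1 := by
    rw [← mul_prod_erase univ _ (mem_univ j₀)]
    exact mul_lt_one_of_nonneg_of_lt_one_left (pow_nonneg (hr j₀).1.le _)
      (pow_lt_one₀ (hr j₀).1.le (hr j₀).2 hj₀.ne')
      (prod_le_one (fun j _ ↦ pow_nonneg (hr j).1.le _) fun j _ ↦
        pow_le_one₀ (hr j).1.le (hr j).2.le)
  have hθ : 0 < (∏ j, (k j : ℝ) ^ k j) / (K : ℝ) ^ K :=
    div_pos (prod_pos fun j _ ↦ by exact_mod_cast Nat.pow_self_pos)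
      (pow_pos (Nat.cast_pos.2 (Nat.pos_of_ne_zero hK0)) _)
  set R := ∏ j, r j ^ k j
  set θ := (∏ j, (k j : ℝ) ^ k j) / (K : ℝ) ^ K
  have hRρ : R ^ ρ = θ := hρ ▸ rpow_logb hR0 hR1.ne hθ
  intro s
  set g : ℕ → ℝ := fun m ↦ (multinomial univ (fun j ↦ m * k j) : ℝ) * R ^ ((m : ℝ) * s)
  have hshift : (fun n : ℕ ↦ (multinomial univ (fun j ↦ (n + 1) * k j) : ℝ) *
      R ^ (((n : ℝ) + 1) * s)) = fun n ↦ g (n + 1) := by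
    funext n; simp [g]
  rw [hshift, summable_nat_add_iff 1]
  set x := R ^ (s - ρ)
  have hg : ∀ m : ℕ, g m = (multinomial univ (fun j ↦ m * k j) : ℝ) * θ ^ m * x ^ m := by
    intro m
    rw [mul_assoc, ← mul_pow, ← hRρ, ← rpow_add hR0, add_sub_cancel, ← rpow_natCast,
      ← rpow_mul hR0.le, mul_comm s]
  refine ⟨fun hs ↦ ?_, fun hs ↦ ?_⟩
  · refine summable_of_eventually_le_pow_mul_geometric (C := exp 1 * K) 1
      (fun m ↦ by positivity) (by positivity) (rpow_lt_one hR0.le hR1 (sub_pos.2 hs)) ?_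
    filter_upwards [eventually_ne_atTop 0] with m hm
    rw [hg, pow_one]
    exact mul_le_mul_of_nonneg_right (multinomial_mul_pow_le hK.symm hK0 hm) (by positivity)
  · refine not_summable_of_eventually_geometric_le_pow_mul (C := (exp 1 * K) ^ N) N
      (one_lt_rpow_of_pos_of_lt_one_of_neg hR0 hR1 (sub_neg.2 hs)) ?_
    filter_upwards [eventually_ne_atTop 0] with m hm
    have h := one_le_multinomial_mul_pow (s := univ) hK.symm hK0 hm
    rw [Finset.card_univ, Fintype.card_fin] at h
    rw [hg]
    exact (le_mul_of_one_le_left (by positivity) h).trans_eq (by ring)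

theorem stmt_15 (N : ℕ) (hN : 2 ≤ N) (k : Fin N → ℕ) (hk : ∃ j, 0 < k j)
    (K : ℕ) (hK : K = ∑ j : Fin N, k j)
    (r : Fin N → ℝ) (hr : ∀ j, 0 < r j ∧ r j < 1)
    (ρ : ℝ)
    (hρ : ρ = Real.log ((∏ j : Fin N, (k j : ℝ) ^ k j) / (K : ℝ) ^ K) /
        Real.log (∏ j : Fin N, r j ^ k j)) :
    ∀ s : ℝ,
      (ρ < s → Summable fun n : ℕ =>
        (Nat.multinomial Finset.univ (fun j : Fin N => (n + 1) * k j) : ℝ) *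
          (∏ j : Fin N, r j ^ k j) ^ (((n : ℝ) + 1) * s)) ∧
      (s < ρ → ¬ Summable fun n : ℕ =>
        (Nat.multinomial Finset.univ (fun j : Fin N => (n + 1) * k j) : ℝ) *
          (∏ j : Fin N, r j ^ k j) ^ (((n : ℝ) + 1) * s)) :=
  stmt_15_general N k hk K hK r hr ρ hρ
end
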